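/- Let R be a commutative ring, n ≥ 1, and A an n×n equicofactor matrix over R (every row sum and every column sum of A is zero). Then the adjugate of A is a constant multiple of the all-ones matrix: there exists c ∈ R such that every entry of adj(A) equals c. -/
import Mathlib


open Matrix

/-- A matrix whose row sums are all zero has determinant zero. -/
lemma det_eq_zero_of_row_sums_zero {R : Type*} [CommRing R] {n : ℕ}
    (B : Matrix (Fin (n + 1)) (Fin (n + 1)) R) (h : ∀ i, ∑ j, B i j = 0) :
    B.det = 0 := by
  have h1 : B *ᵥ (fun _ => (1 : R)) = 0 := by
    funext i
    simpa [Matrix.mulVec, dotProduct] using h i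
  have h2 : (B.adjugate * B) *ᵥ (fun _ => (1 : R)) = 0 := by
    rw [← Matrix.mulVec_mulVec, h1, Matrix.mulVec_zero]
  rw [Matrix.adjugate_mul] at h2
  have := congrFun h2 0
  simpa [Matrix.mulVec, dotProduct, Matrix.smul_apply, Matrix.one_apply,
    Finset.mul_sum] using this

/-- For a matrix with zero row sums, the adjugate is constant along each column. -/
lemma adjugate_row_indep {R : Type*} [CommRing R] {n : ℕ}
    (A : Matrix (Fin (n + 1)) (Fin (n + 1)) R) (hrow : ∀ i, ∑ j, A i j = 0)
    (i i' j : Fin (n + 1)) : A.adjugate i j = A.adjugate i' j := by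
  rw [Matrix.adjugate_apply, Matrix.adjugate_apply]
  have key : (A.updateRow j (Pi.single i 1 - Pi.single i' 1)).det = 0 := by
    apply det_eq_zero_of_row_sums_zero
    intro r
    by_cases hr : r = j
    · subst hr
      simp [Matrix.updateRow_self, Pi.sub_apply, Finset.sum_sub_distrib,
        Pi.single_apply]
    · simp only [Matrix.updateRow_ne hr]
      exact hrow r
  have := Matrix.det_updateRow_add A j (Pi.single i 1 - Pi.single i' 1) (Pi.single i' 1)
  rw [sub_add_cancel, key, zero_add] at this
  rw [this]

/-- The adjugate of an equicofactor matrix (zero row sums and zero column sums) is a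
constant multiple of the all-ones matrix. -/
theorem adjugate_eq_const_of_equicofactor {R : Type*} [CommRing R] {n : ℕ}
    (A : Matrix (Fin (n + 1)) (Fin (n + 1)) R)
    (hrow : ∀ i, ∑ j, A i j = 0) (hcol : ∀ j, ∑ i, A i j = 0) :
    ∃ c : R, ∀ i j, A.adjugate i j = c := by
  refine ⟨A.adjugate 0 0, fun i j => ?_⟩
  have hcolindep : ∀ i j j', A.adjugate i j = A.adjugate i j' := by
    intro i j j'
    have hT : ∀ r, ∑ k, Aᵀ r k = 0 := fun r => hcol r
    have := adjugate_row_indep Aᵀ hT j j' i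
    rw [← Matrix.adjugate_transpose] at this
    simpa using this
  rw [adjugate_row_indep A hrow i 0 j, hcolindep 0 j 0]
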